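/- Let N ≥ 3 and let Σ_N = {0,…,N−1}^ℕ be the one-sided full shift with the shift map σ and metric d(x,y) = N^{−min{ n ≥ 0 : x_n ≠ y_n }} (d(x,x)=0). Then for all integers k, m ≥ 1, the minimal cardinality of an (mk, 1/k)-spanning set (in the neutralized sense) satisfies r_{mk}(Σ_N, 1/k) ≤ N^{m(k+1)+1}; consequently r(Σ_N, 1/k) ≤ (1 + 1/k) log N for every k ≥ 1, and the neutralized topological entropy satisfies h̃_top(σ, Σ_N) = log N. -/

import Mathlib

open Filter Set MeasureTheory ENNReal NNReal Topology

variable {X : Type*}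

/-- The (neutralized) Bowen open ball of order `n` and radius `r` around `x`,
with respect to the distance `d` and the map `T`. -/
def bowenBall (d : X → X → ℝ) (T : X → X) (n : ℕ) (x : X) (r : ℝ) : Set X :=
  {y | ∀ j < n, d (T^[j] x) (T^[j] y) < r}

/-- The neutralized radius `e^{-nε}`. -/
noncomputable def nrad (ε : ℝ) (n : ℕ) : ℝ := Real.exp (-(n : ℝ) * ε)

/-- `M_{N,ε}^s(Z)`: the infimum of `∑ e^{-n_i s}` over all finite or countable covers of `Z`
by neutralized Bowen balls `B_{n_i}(x_i, e^{-n_i ε})` with `n_i ≥ N`. -/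
noncomputable def MN (d : X → X → ℝ) (T : X → X) (ε : ℝ) (N : ℕ) (s : ℝ) (Z : Set X) : ℝ≥0∞ :=
  ⨅ (C : Set (X × ℕ)) (_ : C.Countable) (_ : ∀ p ∈ C, N ≤ p.2)
    (_ : Z ⊆ ⋃ p ∈ C, bowenBall d T p.2 p.1 (nrad ε p.2)),
    ∑' p : C, ENNReal.ofReal (Real.exp (-(p.1.2 : ℝ) * s))

/-- `M_ε^s(Z) = lim_{N → ∞} M_{N,ε}^s(Z)` (the quantity is nondecreasing in `N`). -/
noncomputable def Mlim (d : X → X → ℝ) (T : X → X) (ε s : ℝ) (Z : Set X) : ℝ≥0∞ :=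
  ⨆ N : ℕ, MN d T ε N s Z

/-- The critical value `M_ε(Z) = inf {s ≥ 0 : M_ε^s(Z) = 0}`. -/
noncomputable def Mcrit (d : X → X → ℝ) (T : X → X) (ε : ℝ) (Z : Set X) : ℝ≥0∞ :=
  ⨅ (s : ℝ≥0) (_ : Mlim d T ε (s : ℝ) Z = 0), (s : ℝ≥0∞)

/-- The neutralized Bowen topological entropy `h_top^{B̃}(T,Z) = lim_{ε→0} M_ε(Z) = inf_{ε>0} M_ε(Z)`. -/
noncomputable def htopB (d : X → X → ℝ) (T : X → X) (Z : Set X) : ℝ≥0∞ :=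
  ⨅ (ε : ℝ) (_ : 0 < ε), Mcrit d T ε Z

/-- `-log a`, as a map `ℝ≥0∞ → ℝ≥0∞` (with value `∞` at `0`). -/
noncomputable def negLog (a : ℝ≥0∞) : ℝ≥0∞ :=
  if a = 0 then ∞ else ENNReal.ofReal (-Real.log a.toReal)

/-- The lower neutralized Brin–Katok local entropy of `μ` at scale `ε`:
`∫ liminf_{n→∞} -(1/n) log μ(B_n(x, e^{-nε})) dμ(x)`. -/
noncomputable def lowerBK [MeasurableSpace X] (d : X → X → ℝ) (T : X → X)
    (μ : Measure X) (ε : ℝ) : ℝ≥0∞ :=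
  ∫⁻ x, liminf (fun n : ℕ => negLog (μ (bowenBall d T n x (nrad ε n))) / (n : ℝ≥0∞)) atTop ∂μ

/-- `Λ_{N,ε}^s(μ,δ)`: the infimum of `∑ e^{-n_i s}` over all finite or countable families of
neutralized Bowen balls with `n_i ≥ N` whose union has `μ`-measure `> 1 - δ`. -/
noncomputable def LambdaN [MeasurableSpace X] (d : X → X → ℝ) (T : X → X) (ε : ℝ) (N : ℕ)
    (s : ℝ) (μ : Measure X) (δ : ℝ) : ℝ≥0∞ :=
  ⨅ (C : Set (X × ℕ)) (_ : C.Countable) (_ : ∀ p ∈ C, N ≤ p.2)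
    (_ : ENNReal.ofReal (1 - δ) < μ (⋃ p ∈ C, bowenBall d T p.2 p.1 (nrad ε p.2))),
    ∑' p : C, ENNReal.ofReal (Real.exp (-(p.1.2 : ℝ) * s))

/-- `Λ_ε^s(μ,δ) = lim_{N→∞} Λ_{N,ε}^s(μ,δ)`. -/
noncomputable def LambdaLim [MeasurableSpace X] (d : X → X → ℝ) (T : X → X) (ε s : ℝ)
    (μ : Measure X) (δ : ℝ) : ℝ≥0∞ :=
  ⨆ N : ℕ, LambdaN d T ε N s μ δ

/-- The critical value `Λ_ε(μ,δ) = inf {s ≥ 0 : Λ_ε^s(μ,δ) = 0}`. -/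
noncomputable def LambdaCrit [MeasurableSpace X] (d : X → X → ℝ) (T : X → X) (ε : ℝ)
    (μ : Measure X) (δ : ℝ) : ℝ≥0∞ :=
  ⨅ (s : ℝ≥0) (_ : LambdaLim d T ε (s : ℝ) μ δ = 0), (s : ℝ≥0∞)

/-- The neutralized Katok entropy of `μ` at scale `ε`:
`h_μ^{K̃}(T,ε) = lim_{δ→0} Λ_ε(μ,δ)` (the quantity is monotone in `δ`). -/
noncomputable def katok [MeasurableSpace X] (d : X → X → ℝ) (T : X → X) (ε : ℝ)
    (μ : Measure X) : ℝ≥0∞ :=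
  ⨆ (δ : ℝ) (_ : 0 < δ) (_ : δ < 1), LambdaCrit d T ε μ δ

/-- `r_n(X,ε)`: the smallest cardinality of an `(n,ε)`-spanning set of `X` in the neutralized
sense, i.e. a set `E` such that every `x ∈ X` is within `d_n`-distance `e^{-nε}` of `E`. -/
noncomputable def spanCard (d : X → X → ℝ) (T : X → X) (n : ℕ) (ε : ℝ) : ℕ :=
  sInf {k : ℕ | ∃ E : Finset X, E.card = k ∧
    ∀ x : X, ∃ y ∈ E, ∀ j < n, d (T^[j] x) (T^[j] y) ≤ nrad ε n}

/-- `r(X,ε) = limsup_{n→∞} (1/n) log r_n(X,ε)`. -/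
noncomputable def rSpan (d : X → X → ℝ) (T : X → X) (ε : ℝ) : ℝ≥0∞ :=
  limsup (fun n : ℕ => ENNReal.ofReal (Real.log (spanCard d T n ε) / (n : ℝ))) atTop

/-- The neutralized topological entropy `h̃_top(T,X) = lim_{ε→0} r(X,ε)`
(the quantity is monotone in `ε`, so the limit is the infimum over `ε > 0`). -/
noncomputable def htopN (d : X → X → ℝ) (T : X → X) : ℝ≥0∞ :=
  ⨅ (ε : ℝ) (_ : 0 < ε), rSpan d T ε

section AuxFullShift

lemma shift_iter' {α : Type*} (x : ℕ → α) (j : ℕ) :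
    (fun (x : ℕ → α) (i : ℕ) => x (i + 1))^[j] x = fun i => x (i + j) := by
  induction j generalizing x with
  | zero => simp
  | succ j ih =>
    rw [Function.iterate_succ_apply, ih]
    funext i
    simp [Nat.add_assoc, Nat.add_comm 1 j]

lemma one_le_log' (N : ℕ) (hN : 3 ≤ N) : (1:ℝ) ≤ Real.log N := by
  have h1 : Real.exp 1 ≤ 3 := by
    have := Real.exp_one_lt_d9
    linarith
  calc (1:ℝ) = Real.log (Real.exp 1) := (Real.log_exp 1).symm
    _ ≤ Real.log N := Real.log_le_log (Real.exp_pos 1)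
        (h1.trans (by exact_mod_cast hN))

lemma exists_span' (N : ℕ) (hN : 3 ≤ N)
    (d : (ℕ → Fin N) → (ℕ → Fin N) → ℝ)
    (hd : ∀ x y : ℕ → Fin N, x ≠ y → d x y = ((N : ℝ) ^ sInf {n : ℕ | x n ≠ y n})⁻¹)
    (hd0 : ∀ x : ℕ → Fin N, d x x = 0)
    (ε : ℝ) (n L : ℕ) (hnL : n ≤ L)
    (hcond : ∀ j < n, (n : ℝ) * ε ≤ ((L - j : ℕ) : ℝ) * Real.log N) :
    ∃ E : Finset (ℕ → Fin N), E.card ≤ N ^ L ∧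
      ∀ x : ℕ → Fin N, ∃ y ∈ E, ∀ j < n,
        d ((fun (x : ℕ → Fin N) (i : ℕ) => x (i + 1))^[j] x)
          ((fun (x : ℕ → Fin N) (i : ℕ) => x (i + 1))^[j] y) ≤ nrad ε n := by
  haveI : NeZero N := ⟨by omega⟩
  classical
  set f : (Fin L → Fin N) → (ℕ → Fin N) :=
    fun w i => if h : i < L then w ⟨i, h⟩ else 0 with hf
  refine ⟨Finset.image f Finset.univ, ?_, ?_⟩
  · calc (Finset.image f Finset.univ).card ≤ Finset.univ.card := Finset.card_image_le
      _ = N ^ L := by simp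
  · intro x
    set y := f (fun i : Fin L => x i) with hy
    have hyx : ∀ i < L, y i = x i := by
      intro i hi
      simp [hy, hf, hi]
    refine ⟨y, by rw [hy]; exact Finset.mem_image_of_mem f (Finset.mem_univ (fun i : Fin L => x i)), ?_⟩
    intro j hj
    rw [shift_iter', shift_iter']
    by_cases hxy : (fun i => x (i + j)) = (fun i => y (i + j))
    · rw [hxy, hd0]
      exact (Real.exp_pos _).le
    · rw [hd _ _ hxy]
      have hSne : {m : ℕ | (fun i => x (i + j)) m ≠ (fun i => y (i + j)) m}.Nonempty :=
        Function.ne_iff.mp hxy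
      have hmem := Nat.sInf_mem hSne
      set s := sInf {m : ℕ | (fun i => x (i + j)) m ≠ (fun i => y (i + j)) m} with hs
      have hlow : L - j ≤ s := by
        by_contra hlt
        push_neg at hlt
        have hsl : s + j < L := by omega
        exact hmem (by simpa using (hyx (s + j) hsl).symm)
      have hN1 : (1:ℝ) ≤ N := by
        have : (3:ℝ) ≤ N := by exact_mod_cast hN
        linarith
      have hpow : ((N:ℝ) ^ (L - j)) ≤ (N:ℝ) ^ s := pow_le_pow_right₀ hN1 hlow
      have hpos : (0:ℝ) < (N:ℝ) ^ (L - j) := by positivity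
      have h1 : ((N:ℝ) ^ s)⁻¹ ≤ ((N:ℝ) ^ (L - j))⁻¹ := inv_anti₀ hpos hpow
      refine h1.trans ?_
      have hNpos : (0:ℝ) < N := by positivity
      have heq : ((N:ℝ) ^ (L - j))⁻¹ = Real.exp (-(((L - j : ℕ) : ℝ) * Real.log N)) := by
        rw [Real.exp_neg, Real.exp_nat_mul, Real.exp_log hNpos]
      rw [heq]
      unfold nrad
      apply Real.exp_le_exp.mpr
      have := hcond j hj
      linarith

lemma spanCard_le' (N : ℕ) (hN : 3 ≤ N)
    (d : (ℕ → Fin N) → (ℕ → Fin N) → ℝ)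
    (hd : ∀ x y : ℕ → Fin N, x ≠ y → d x y = ((N : ℝ) ^ sInf {n : ℕ | x n ≠ y n})⁻¹)
    (hd0 : ∀ x : ℕ → Fin N, d x x = 0)
    (ε : ℝ) (n L : ℕ) (hnL : n ≤ L)
    (hcond : ∀ j < n, (n : ℝ) * ε ≤ ((L - j : ℕ) : ℝ) * Real.log N) :
    spanCard d (fun (x : ℕ → Fin N) (i : ℕ) => x (i + 1)) n ε ≤ N ^ L := by
  obtain ⟨E, hcard, hspan⟩ := exists_span' N hN d hd hd0 ε n L hnL hcond
  exact le_trans (Nat.sInf_le ⟨E, rfl, hspan⟩) hcard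

lemma pow_le_spanCard' (N : ℕ) (hN : 3 ≤ N)
    (d : (ℕ → Fin N) → (ℕ → Fin N) → ℝ)
    (hd : ∀ x y : ℕ → Fin N, x ≠ y → d x y = ((N : ℝ) ^ sInf {n : ℕ | x n ≠ y n})⁻¹)
    (hd0 : ∀ x : ℕ → Fin N, d x x = 0)
    (ε : ℝ) (hε : 0 < ε) (n : ℕ) (hn : 1 ≤ n) :
    N ^ n ≤ spanCard d (fun (x : ℕ → Fin N) (i : ℕ) => x (i + 1)) n ε := by
  haveI : NeZero N := ⟨by omega⟩
  classical
  have hlog := one_le_log' N hN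
  set S := {k : ℕ | ∃ E : Finset (ℕ → Fin N), E.card = k ∧
    ∀ x : ℕ → Fin N, ∃ y ∈ E, ∀ j < n,
      d ((fun (x : ℕ → Fin N) (i : ℕ) => x (i + 1))^[j] x)
        ((fun (x : ℕ → Fin N) (i : ℕ) => x (i + 1))^[j] y) ≤ nrad ε n} with hS
  have hSne : S.Nonempty := by
    have hcond : ∀ j < n, (n : ℝ) * ε ≤ ((n + ⌈(n : ℝ) * ε⌉₊ - j : ℕ) : ℝ) * Real.log N := by
      intro j hj
      have h1 : (n : ℝ) * ε ≤ (⌈(n : ℝ) * ε⌉₊ : ℝ) := Nat.le_ceil _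
      have h2 : (⌈(n : ℝ) * ε⌉₊ : ℝ) ≤ ((n + ⌈(n : ℝ) * ε⌉₊ - j : ℕ) : ℝ) := by
        have : ⌈(n : ℝ) * ε⌉₊ ≤ n + ⌈(n : ℝ) * ε⌉₊ - j := by omega
        exact_mod_cast this
      have h3 : (0:ℝ) ≤ ((n + ⌈(n : ℝ) * ε⌉₊ - j : ℕ) : ℝ) := Nat.cast_nonneg _
      nlinarith
    obtain ⟨E, _, hspan⟩ := exists_span' N hN d hd hd0 ε n (n + ⌈(n : ℝ) * ε⌉₊)
      (by omega) hcond
    exact ⟨E.card, E, rfl, hspan⟩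
  have hmem : spanCard d (fun (x : ℕ → Fin N) (i : ℕ) => x (i + 1)) n ε ∈ S :=
    Nat.sInf_mem hSne
  obtain ⟨E, hcard, hspan⟩ := hmem
  rw [← hcard]
  have key : ∀ w : Fin n → Fin N, ∃ y ∈ E, ∀ j : Fin n, y j = w j := by
    intro w
    set x : ℕ → Fin N := fun i => if h : i < n then w ⟨i, h⟩ else 0 with hx
    obtain ⟨y, hyE, hy⟩ := hspan x
    refine ⟨y, hyE, ?_⟩
    intro j
    have hj := hy j j.2
    rw [shift_iter', shift_iter'] at hj
    have hrad : nrad ε n < 1 := by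
      unfold nrad
      rw [← Real.exp_zero]
      apply Real.exp_lt_exp.mpr
      have : (0:ℝ) < (n:ℝ) * ε := by positivity
      linarith
    by_contra hne
    have hne0 : (fun i => x (i + (j:ℕ))) ≠ (fun i => y (i + (j:ℕ))) := by
      intro hcontr
      apply hne
      have := congrFun hcontr 0
      simp only [Nat.zero_add] at this
      rw [← this]
      simp [hx, j.2]
    rw [hd _ _ hne0] at hj
    have h0 : (0:ℕ) ∈ {m : ℕ | (fun i => x (i + (j:ℕ))) m ≠ (fun i => y (i + (j:ℕ))) m} := by
      simp only [Set.mem_setOf_eq, Nat.zero_add]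
      intro hcontr
      apply hne
      rw [← hcontr]
      simp [hx, j.2]
    have hinf0 : sInf {m : ℕ | (fun i => x (i + (j:ℕ))) m ≠ (fun i => y (i + (j:ℕ))) m} = 0 :=
      Nat.le_zero.mp (Nat.sInf_le h0)
    rw [hinf0] at hj
    simp at hj
    linarith
  choose g hgE hg using key
  have hginj : Function.Injective g := by
    intro w w' hww
    funext j
    rw [← hg w j, hww, hg w' j]
  have hGinj : Function.Injective (fun w : Fin n → Fin N => (⟨g w, hgE w⟩ : {a // a ∈ E})) :=
    fun w w' h => hginj (congrArg Subtype.val h)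
  calc N ^ n = Fintype.card (Fin n → Fin N) := by simp
    _ ≤ Fintype.card {a // a ∈ E} := Fintype.card_le_of_injective _ hGinj
    _ = E.card := Fintype.card_coe E

end AuxFullShift


/-- For the one-sided full shift on `N ≥ 3` symbols with the metric
`d(x,y) = N^{-min{n : x_n ≠ y_n}}`: for all `k, m ≥ 1` one has
`r_{mk}(Σ_N, 1/k) ≤ N^{m(k+1)+1}`; consequently `r(Σ_N, 1/k) ≤ (1 + 1/k) log N` for every
`k ≥ 1`, and the neutralized topological entropy satisfies `h̃_top(σ, Σ_N) = log N`. -/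
theorem htopN_full_shift (N : ℕ) (hN : 3 ≤ N)
    (d : (ℕ → Fin N) → (ℕ → Fin N) → ℝ)
    (hd : ∀ x y : ℕ → Fin N, x ≠ y → d x y = ((N : ℝ) ^ sInf {n : ℕ | x n ≠ y n})⁻¹)
    (hd0 : ∀ x : ℕ → Fin N, d x x = 0) :
    (∀ k m : ℕ, 1 ≤ k → 1 ≤ m →
      spanCard d (fun x i => x (i + 1)) (m * k) (1 / (k : ℝ)) ≤ N ^ (m * (k + 1) + 1)) ∧
    (∀ k : ℕ, 1 ≤ k →
      rSpan d (fun x i => x (i + 1)) (1 / (k : ℝ))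
        ≤ ENNReal.ofReal ((1 + 1 / (k : ℝ)) * Real.log N)) ∧
    htopN d (fun x i => x (i + 1)) = ENNReal.ofReal (Real.log N) := by
  have hlog1 : (1:ℝ) ≤ Real.log N := one_le_log' N hN
  have hlogpos : (0:ℝ) < Real.log N := lt_of_lt_of_le one_pos hlog1
  have part1 : ∀ k m : ℕ, 1 ≤ k → 1 ≤ m →
      spanCard d (fun x i => x (i + 1)) (m * k) (1 / (k : ℝ)) ≤ N ^ (m * (k + 1) + 1) := by
    intro k m hk hm
    apply spanCard_le' N hN d hd hd0
    · have : m * (k + 1) = m * k + m := by ring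
      omega
    · intro j hj
      have hkR : (0:ℝ) < k := by exact_mod_cast hk
      have hLHS : ((m * k : ℕ) : ℝ) * (1 / k) = m := by
        push_cast
        field_simp
      rw [hLHS]
      have hLj : m + 2 ≤ m * (k + 1) + 1 - j := by
        have : m * (k + 1) = m * k + m := by ring
        omega
      have hLjR : ((m:ℝ) + 2) ≤ ((m * (k + 1) + 1 - j : ℕ) : ℝ) := by exact_mod_cast hLj
      have h0 : (0:ℝ) ≤ (m:ℝ) + 2 := by positivity
      nlinarith
  have part2 : ∀ k : ℕ, 1 ≤ k →
      rSpan d (fun x i => x (i + 1)) (1 / (k : ℝ))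
        ≤ ENNReal.ofReal ((1 + 1 / (k : ℝ)) * Real.log N) := by
    intro k hk
    have hkR : (0:ℝ) < k := by exact_mod_cast hk
    unfold rSpan
    have hle : ∀ᶠ n : ℕ in atTop,
        ENNReal.ofReal
            (Real.log (spanCard d (fun x i => x (i + 1)) n (1 / (k:ℝ))) / n)
          ≤ ENNReal.ofReal ((1 + 1 / (k:ℝ)) * Real.log N + Real.log N / n) := by
      filter_upwards [eventually_ge_atTop 1] with n hn
      apply ENNReal.ofReal_le_ofReal
      have hup : spanCard d (fun x i => x (i + 1)) n (1 / (k:ℝ)) ≤ N ^ (n + n / k + 1) := by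
        apply spanCard_le' N hN d hd hd0
        · have := Nat.zero_le (n / k); omega
        · intro j hj
          have h1 : (n:ℝ) / k ≤ ((n / k : ℕ) : ℝ) + 1 := by
            have h : n < (n / k + 1) * k := by
              have h1 := Nat.div_add_mod n k
              have h2 : n % k < k := Nat.mod_lt n hk
              nlinarith
            rw [div_le_iff₀ hkR]
            calc (n:ℝ) ≤ (((n / k + 1) * k : ℕ) : ℝ) := by exact_mod_cast h.le
              _ = (((n / k : ℕ) : ℝ) + 1) * k := by push_cast; ring
          have h2 : ((n / k : ℕ) : ℝ) + 1 ≤ ((n + n / k + 1 - j : ℕ) : ℝ) := by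
            have : n / k + 1 ≤ n + n / k + 1 - j := by omega
            exact_mod_cast this
          have h3 : (0:ℝ) ≤ ((n + n / k + 1 - j : ℕ) : ℝ) := Nat.cast_nonneg _
          have h4 : (n:ℝ) * (1 / k) = (n:ℝ) / k := by ring
          rw [h4]
          nlinarith
      have hlow : 1 ≤ spanCard d (fun x i => x (i + 1)) n (1 / (k:ℝ)) := by
        have h := pow_le_spanCard' N hN d hd hd0 (1 / (k:ℝ)) (one_div_pos.mpr hkR) n hn
        have hNn : 1 ≤ N ^ n := Nat.one_le_pow n N (lt_of_lt_of_le (by norm_num) hN)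
        exact le_trans hNn h
      have hnR : (0:ℝ) < n := by exact_mod_cast hn
      have hsc : (0:ℝ) < (spanCard d (fun x i => x (i + 1)) n (1 / (k:ℝ)) : ℝ) := by
        exact_mod_cast hlow
      have hlog2 : Real.log (spanCard d (fun x i => x (i + 1)) n (1 / (k:ℝ)))
          ≤ ((n + n / k + 1 : ℕ) : ℝ) * Real.log N := by
        calc Real.log (spanCard d (fun x i => x (i + 1)) n (1 / (k:ℝ)))
            ≤ Real.log ((N:ℝ) ^ (n + n / k + 1)) :=
              Real.log_le_log hsc (by exact_mod_cast hup)
          _ = ((n + n / k + 1 : ℕ) : ℝ) * Real.log N := Real.log_pow _ _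
      have hcast : ((n / k : ℕ) : ℝ) ≤ (n:ℝ) / k := Nat.cast_div_le
      rw [div_le_iff₀ hnR]
      have hexp : ((n + n / k + 1 : ℕ) : ℝ) = (n:ℝ) + ((n / k : ℕ) : ℝ) + 1 := by push_cast; ring
      rw [hexp] at hlog2
      have hmul : Real.log (N:ℝ) / n * n = Real.log N := div_mul_cancel₀ _ hnR.ne'
      have h5 : ((n / k : ℕ):ℝ) * Real.log N ≤ (n:ℝ) / k * Real.log N :=
        mul_le_mul_of_nonneg_right hcast hlogpos.le
      have h6 : ((1 + 1/(k:ℝ)) * Real.log N + Real.log N / n) * n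
          = (n:ℝ) * Real.log N + (n:ℝ) / k * Real.log N + Real.log N := by
        field_simp
      rw [h6]
      linarith
    calc limsup (fun n : ℕ =>
            ENNReal.ofReal
              (Real.log (spanCard d (fun x i => x (i + 1)) n (1 / (k:ℝ))) / n)) atTop
        ≤ limsup (fun n : ℕ =>
            ENNReal.ofReal ((1 + 1 / (k:ℝ)) * Real.log N + Real.log N / n)) atTop :=
          limsup_le_limsup hle
      _ = ENNReal.ofReal ((1 + 1 / (k:ℝ)) * Real.log N) := by
          apply Filter.Tendsto.limsup_eq
          have h : Tendsto (fun n : ℕ => (1 + 1 / (k:ℝ)) * Real.log N + Real.log N / n)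
              atTop (nhds ((1 + 1 / (k:ℝ)) * Real.log N + 0)) :=
            tendsto_const_nhds.add (tendsto_const_div_atTop_nhds_zero_nat _)
          rw [add_zero] at h
          exact (ENNReal.continuous_ofReal.tendsto _).comp h
  refine ⟨part1, part2, ?_⟩
  apply le_antisymm
  · apply ENNReal.le_of_forall_pos_le_add
    intro η hη _
    have hηR : (0:ℝ) < η := hη
    obtain ⟨k, hk⟩ := exists_nat_gt (Real.log N / (η:ℝ))
    have hkR : (0:ℝ) < k := lt_trans (div_pos hlogpos hηR) hk
    have hk1 : 1 ≤ k := by exact_mod_cast Nat.one_le_iff_ne_zero.mpr (by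
      rintro rfl; simp at hkR)
    calc htopN d (fun x i => x (i + 1))
        ≤ rSpan d (fun x i => x (i + 1)) (1 / (k:ℝ)) := by
          apply iInf₂_le (1 / (k:ℝ)) (by positivity)
      _ ≤ ENNReal.ofReal ((1 + 1 / (k:ℝ)) * Real.log N) := part2 k hk1
      _ = ENNReal.ofReal (Real.log N + Real.log N / k) := by
          rw [show (1 + 1 / (k:ℝ)) * Real.log N = Real.log N + Real.log N / k by ring]
      _ ≤ ENNReal.ofReal (Real.log N) + ENNReal.ofReal (Real.log N / k) :=
          ENNReal.ofReal_add_le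
      _ ≤ ENNReal.ofReal (Real.log N) + η := by
          gcongr
          rw [← ENNReal.ofReal_coe_nnreal]
          apply ENNReal.ofReal_le_ofReal
          rw [div_le_iff₀ hkR]
          rw [div_lt_iff₀ hηR] at hk
          nlinarith
  · unfold htopN
    apply le_iInf₂
    intro ε hε
    unfold rSpan
    have hev : ∀ᶠ n : ℕ in atTop,
        ENNReal.ofReal (Real.log N) ≤
          ENNReal.ofReal (Real.log (spanCard d (fun x i => x (i + 1)) n ε) / n) := by
      filter_upwards [eventually_ge_atTop 1] with n hn
      apply ENNReal.ofReal_le_ofReal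
      have hlowN := pow_le_spanCard' N hN d hd hd0 ε hε n hn
      have hnR : (0:ℝ) < n := by exact_mod_cast hn
      have hNpos : (0:ℝ) < N := by
        have : (3:ℝ) ≤ N := by exact_mod_cast hN
        linarith
      rw [le_div_iff₀ hnR]
      calc Real.log N * n = Real.log ((N:ℝ) ^ n) := by rw [Real.log_pow]; ring
        _ ≤ Real.log (spanCard d (fun x i => x (i + 1)) n ε) :=
            Real.log_le_log (by positivity) (by exact_mod_cast hlowN)
    exact le_limsup_of_frequently_le hev.frequently
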